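/- Let (M, Ω) be a presymplectic manifold (Ω a closed 2-form), θ a 1-form with Ω = −dθ, and R, X vector fields with 𝓛_R θ = 0, ι_X Ω = dH for a smooth function H, and 𝓛_R H = 0. Then the function μ = ι_R θ satisfies 𝓛_X μ = 0. -/
import Mathlib


/-- Exterior derivative of a 1-form `θ` on a vector space, evaluated on constant
vector fields: `dθ(u,v) = D_u(θ(·)(v)) − D_v(θ(·)(u))`. -/
noncomputable def oneFormD {M : Type*} [NormedAddCommGroup M] [NormedSpace ℝ M]
    (θ : M → (M →L[ℝ] ℝ)) (m u v : M) : ℝ :=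
  fderiv ℝ (fun x => θ x v) m u - fderiv ℝ (fun x => θ x u) m v

/-- Continuous-time Noether theorem computation (Proposition 2.10), modeled on a
normed vector space `M`: if `Ω = −dθ`, `𝓛_R θ = 0` (written via Cartan's formula),
`ι_X Ω = dH`, and `𝓛_R H = 0`, then `μ = ι_R θ` satisfies `𝓛_X μ = 0`. -/
theorem stmt_16 {M : Type*} [NormedAddCommGroup M] [NormedSpace ℝ M]
    (θ : M → (M →L[ℝ] ℝ)) (Ω : M → M → M → ℝ) (R X : M → M) (H : M → ℝ)
    (hΩ : ∀ m u v, Ω m u v = -(oneFormD θ m u v))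
    -- `𝓛_R θ = 0`, i.e. `ι_R dθ + d(ι_R θ) = 0`:
    (hLRθ : ∀ m w, oneFormD θ m (R m) w + fderiv ℝ (fun x => θ x (R x)) m w = 0)
    -- `ι_X Ω = dH`:
    (hHam : ∀ m w, Ω m (X m) w = fderiv ℝ H m w)
    -- `𝓛_R H = 0`:
    (hRH : ∀ m, fderiv ℝ H m (R m) = 0) :
    -- `𝓛_X μ = 0` for `μ = ι_R θ`:
    ∀ m, fderiv ℝ (fun x => θ x (R x)) m (X m) = 0 := by
  intro m
  have h1 := hLRθ m (X m)
  have h2 := hHam m (R m)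
  rw [hΩ] at h2
  have h3 := hRH m
  simp only [oneFormD] at *
  linarith
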